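/- arXiv:1112.1230 — 5 statements merged into one kernel-verified Lean document; each statement's English description precedes it below -/
import Mathlib

section
/- Let d_1, ..., d_n be pairwise coprime positive integers and D = d_1·...·d_n. Then there exist no positive integers m_1, ..., m_n such that ∑_{j=1}^n m_j·(D/d_j) = (n-1)·D. -/
/-!
Write `D_j = D / d_j` for the product of the other moduli. Reducing `∑ m_k D_k` modulo `d_j`
kills every term but `m_j D_j`, and `D_j` is coprime to `d_j`; so if `D` divides the sum, then
`d_j ∣ m_j`, whence `m_j D_j ≥ D` for every `j` and the sum is at least `n D > (n - 1) D`.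
-/

open Finset Function

variable {ι : Type*} [DecidableEq ι] {s : Finset ι} {d m : ι → ℕ}

lemma dvd_of_dvd_sum_mul_prod_erase (hcop : (s : Set ι).Pairwise (Nat.Coprime on d))
    {j : ι} (hj : j ∈ s) (h : d j ∣ ∑ k ∈ s, m k * ∏ i ∈ s.erase k, d i) : d j ∣ m j := by
  have hrest : d j ∣ ∑ k ∈ s.erase j, m k * ∏ i ∈ s.erase k, d i :=
    dvd_sum fun k hk => dvd_mul_of_dvd_right
      (dvd_prod_of_mem _ (mem_erase.2 ⟨(ne_of_mem_erase hk).symm, hj⟩)) _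
  rw [← add_sum_erase s _ hj, Nat.dvd_add_left hrest] at h
  have hcop_j : Nat.Coprime (d j) (∏ i ∈ s.erase j, d i) :=
    Nat.Coprime.prod_right fun i hi => hcop hj (mem_of_mem_erase hi) (ne_of_mem_erase hi).symm
  exact hcop_j.dvd_of_dvd_mul_right h

lemma card_mul_prod_le_of_prod_dvd_sum_mul_prod_erase
    (hcop : (s : Set ι).Pairwise (Nat.Coprime on d)) (hm : ∀ j ∈ s, 0 < m j)
    (hdvd : ∏ i ∈ s, d i ∣ ∑ k ∈ s, m k * ∏ i ∈ s.erase k, d i) :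
    #s * ∏ i ∈ s, d i ≤ ∑ k ∈ s, m k * ∏ i ∈ s.erase k, d i := by
  refine card_nsmul_le_sum s _ _ fun j hj => ?_
  have hdm : d j ≤ m j := Nat.le_of_dvd (hm j hj)
    (dvd_of_dvd_sum_mul_prod_erase hcop hj ((dvd_prod_of_mem d hj).trans hdvd))
  rw [← mul_prod_erase s d hj]
  exact Nat.mul_le_mul_right _ hdm

/-- No positive integers `m j` satisfy `∑ j, m j * (D / d j) = (n-1) * D`
for pairwise coprime positive `d j` with product `D`. -/
theorem stmt0 (n : ℕ) (hn : 1 ≤ n) (d : Fin n → ℕ)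
    (hpos : ∀ j, 0 < d j)
    (hcop : ∀ j k : Fin n, j ≠ k → Nat.Coprime (d j) (d k))
    (D : ℕ) (hD : D = ∏ j, d j) :
    ¬ ∃ m : Fin n → ℕ, (∀ j, 0 < m j) ∧
      (∑ j, m j * (D / d j)) = (n - 1) * D := by
  rintro ⟨m, hm, hsum⟩
  have hcofactor : ∀ j, D / d j = ∏ i ∈ univ.erase j, d i := fun j => by
    rw [hD, ← mul_prod_erase univ d (mem_univ j), Nat.mul_div_cancel_left _ (hpos j)]
  simp only [hcofactor] at hsum
  have hbound : n * D ≤ (n - 1) * D := by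
    have := card_mul_prod_le_of_prod_dvd_sum_mul_prod_erase (s := univ) (m := m)
      (fun j _ k _ hjk => hcop j k hjk) (fun j _ => hm j) (by rw [hsum, ← hD]; exact dvd_mul_left D _)
    rwa [card_univ, Fintype.card_fin, ← hD, hsum] at this
  have hDpos : 0 < D := hD ▸ prod_pos fun j _ => hpos j
  have : (n - 1) * D < n * D := Nat.mul_lt_mul_of_pos_right (by omega) hDpos
  omega
end

section
/- Let d_1, ..., d_n be pairwise coprime positive integers and D = d_1·...·d_n. If d is a positive integer dividing D that lies in the additive semigroup generated by D/d_1, ..., D/d_n (i.e., d = ∑_j m_j·(D/d_j) with all m_j nonnegative integers), then D/d_j divides d for some j ∈ {1,...,n}. -/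
/-!
Fix `k` with `d k ∤ e` and put `g = gcd e (d k)`, `c = D / d k`. Since `e ∣ d k * c`, already
`e ∣ g * c`. Reducing the representation of `e` modulo `d k` kills every term but `m k * c`,
and `c` is a unit modulo `d k`, so `g ∣ m k`; moreover `m k ≠ 0`, as otherwise `d k ∣ e`.
Hence `g * c ≤ m k * c ≤ e`, and together with `e ∣ g * c` this gives `e = g * c`.
If no such `k` exists, then `D ∣ e` by pairwise coprimality.
-/

open Finset Function

namespace Nat

theorem dvd_gcd_mul_of_dvd_mul {e a b : ℕ} (h : e ∣ a * b) : e ∣ gcd e a * b := by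
  rw [← Nat.gcd_mul_right]
  exact Nat.dvd_gcd (Nat.dvd_mul_right e b) h

theorem gcd_mul_le_of_eq_mul_add {d c m r e : ℕ} (hdc : Coprime d c) (hdr : d ∣ r)
    (he : e = m * c + r) (hde : ¬ d ∣ e) : gcd e d * c ≤ e := by
  have hgmc : gcd e d ∣ m * c :=
    (Nat.dvd_add_left ((gcd_dvd_right e d).trans hdr)).mp (he ▸ gcd_dvd_left e d)
  have hgm : gcd e d ∣ m :=
    (hdc.coprime_dvd_left (gcd_dvd_right e d)).dvd_of_dvd_mul_right hgmc
  have hm : m ≠ 0 := by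
    rintro rfl
    exact hde (by simpa [he] using hdr)
  calc gcd e d * c ≤ m * c := Nat.mul_le_mul_right c (Nat.le_of_dvd (Nat.pos_of_ne_zero hm) hgm)
    _ ≤ e := he ▸ Nat.le_add_right _ _

variable {ι : Type*} [Fintype ι] {d : ι → ℕ}

theorem prod_dvd_of_forall_dvd (hcop : Pairwise (Coprime on d)) {e : ℕ} (h : ∀ i, d i ∣ e) :
    ∏ i, d i ∣ e := by
  have hℤ := Fintype.prod_dvd_of_coprime (s := fun i ↦ (d i : ℤ))
    (fun _ _ hij ↦ Nat.isCoprime_iff_coprime.mpr (hcop hij))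
    (fun i ↦ Int.natCast_dvd_natCast.mpr (h i))
  exact_mod_cast hℤ

variable [DecidableEq ι]

theorem prod_div_eq_prod_erase {k : ι} (hk : 0 < d k) :
    (∏ i, d i) / d k = ∏ i ∈ univ.erase k, d i := by
  rw [← mul_prod_erase univ d (mem_univ k), Nat.mul_div_cancel_left _ hk]

theorem prod_erase_dvd_of_not_dvd (hpos : ∀ i, 0 < d i) (hcop : Pairwise (Coprime on d))
    {e : ℕ} (he : 0 < e) (hdvd : e ∣ ∏ i, d i) (m : ι → ℕ)
    (hrep : e = ∑ i, m i * ∏ j ∈ univ.erase i, d j) {k : ι} (hk : ¬ d k ∣ e) :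
    ∏ j ∈ univ.erase k, d j ∣ e := by
  set c := ∏ j ∈ univ.erase k, d j
  have hc : 0 < c := prod_pos fun j _ ↦ hpos j
  have hdvd_gc : e ∣ gcd e (d k) * c :=
    dvd_gcd_mul_of_dvd_mul (mul_prod_erase univ d (mem_univ k) ▸ hdvd)
  have hcop_c : Coprime (d k) c :=
    Coprime.prod_right fun j hj ↦ hcop (ne_of_mem_erase hj).symm
  have hdvd_rest : d k ∣ ∑ i ∈ univ.erase k, m i * ∏ j ∈ univ.erase i, d j :=
    dvd_sum fun i hi ↦ (dvd_prod_of_mem d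
      (mem_erase.mpr ⟨(ne_of_mem_erase hi).symm, mem_univ k⟩)).mul_left (m i)
  have hsplit : e = m k * c + ∑ i ∈ univ.erase k, m i * ∏ j ∈ univ.erase i, d j := by
    rw [hrep, ← add_sum_erase univ _ (mem_univ k)]
  have hgc_le : gcd e (d k) * c ≤ e := gcd_mul_le_of_eq_mul_add hcop_c hdvd_rest hsplit hk
  have hgc : e = gcd e (d k) * c :=
    le_antisymm (Nat.le_of_dvd (Nat.mul_pos (gcd_pos_of_pos_left _ he) hc) hdvd_gc) hgc_le
  exact Dvd.intro_left _ hgc.symm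

end Nat

/-- If a positive divisor `e` of `D` lies in the additive semigroup generated by
the `D / d j`, then `D / d j ∣ e` for some `j`. -/
theorem stmt1 (n : ℕ) (hn : 1 ≤ n) (d : Fin n → ℕ)
    (hpos : ∀ j, 0 < d j)
    (hcop : ∀ j k : Fin n, j ≠ k → Nat.Coprime (d j) (d k))
    (D : ℕ) (hD : D = ∏ j, d j)
    (e : ℕ) (he : 0 < e) (hdvd : e ∣ D)
    (m : Fin n → ℕ) (hrep : e = ∑ j, m j * (D / d j)) :
    ∃ j, (D / d j) ∣ e := by
  subst hD
  simp only [Nat.prod_div_eq_prod_erase (hpos _)] at hrep ⊢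
  by_cases hall : ∀ k, d k ∣ e
  · exact ⟨⟨0, hn⟩, (prod_dvd_prod_of_subset _ _ d (erase_subset _ _)).trans
      (Nat.prod_dvd_of_forall_dvd hcop hall)⟩
  · obtain ⟨k, hk⟩ := not_forall.mp hall
    exact ⟨k, Nat.prod_erase_dvd_of_not_dvd hpos hcop he hdvd m hrep hk⟩
end

section
/- Suppose N = A·M + d·M', N' = B·M' + d'·M, ν = A·i + d·i', ν' = B·i' + d'·i, and q = d·d' − A·B with q ≠ 0, where A, B, d, d' are positive integers and M, M', i, i', N, N', ν, ν' are integers (or rationals). Then as rational functions in s one has the identity q/((ν+sN)(ν'+sN')) = d/((ν+sN)(i+sM)) + d'/((ν'+sN')(i'+sM')) − 1/((i+sM)(i'+sM')), wherever all denominators are nonzero. -/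
/- With x = i + sM and y = i' + sM', the splice relations read ν + sN = Ax + dy and
ν' + sN' = By + d'x, and clearing denominators the identity reduces to
(dd' - AB)xy = dy(By + d'x) + d'x(Ax + dy) - (Ax + dy)(By + d'x). -/

theorem splice_partial_fraction {K : Type*} [Field K] {A B d d' x y : K}
    (hx : x ≠ 0) (hy : y ≠ 0) (hu : A * x + d * y ≠ 0) (hv : B * y + d' * x ≠ 0) :
    (d * d' - A * B) / ((A * x + d * y) * (B * y + d' * x)) =
      d / ((A * x + d * y) * x) + d' / ((B * y + d' * x) * y) - 1 / (x * y) := by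
  field_simp
  ring

theorem stmt3_general (A B d d' i i' M M' ν ν' N N' q s : ℚ)
    (hN : N = A * M + d * M') (hN' : N' = B * M' + d' * M)
    (hν : ν = A * i + d * i') (hν' : ν' = B * i' + d' * i)
    (hq : q = d * d' - A * B)
    (h1 : ν + s * N ≠ 0) (h2 : ν' + s * N' ≠ 0)
    (h3 : i + s * M ≠ 0) (h4 : i' + s * M' ≠ 0) :
    q / ((ν + s * N) * (ν' + s * N')) =
      d / ((ν + s * N) * (i + s * M)) + d' / ((ν' + s * N') * (i' + s * M'))
        - 1 / ((i + s * M) * (i' + s * M')) := by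
  have hu : ν + s * N = A * (i + s * M) + d * (i' + s * M') := by rw [hN, hν]; ring
  have hv : ν' + s * N' = B * (i' + s * M') + d' * (i + s * M) := by rw [hN', hν']; ring
  rw [hu] at h1
  rw [hv] at h2
  rw [hu, hv, hq]
  exact splice_partial_fraction h3 h4 h1 h2

/-- The splice-edge partial fraction identity for topological zeta functions. -/
theorem stmt3 (A B d d' i i' M M' ν ν' N N' q s : ℚ)
    (hA : 0 < A) (hB : 0 < B) (hd : 0 < d) (hd' : 0 < d')
    (hN : N = A * M + d * M') (hN' : N' = B * M' + d' * M)
    (hν : ν = A * i + d * i') (hν' : ν' = B * i' + d' * i)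
    (hq : q = d * d' - A * B) (hq0 : q ≠ 0)
    (h1 : ν + s * N ≠ 0) (h2 : ν' + s * N' ≠ 0)
    (h3 : i + s * M ≠ 0) (h4 : i' + s * M' ≠ 0) :
    q / ((ν + s * N) * (ν' + s * N')) =
      d / ((ν + s * N) * (i + s * M)) + d' / ((ν' + s * N') * (i' + s * M'))
        - 1 / ((i + s * M) * (i' + s * M')) :=
  stmt3_general A B d d' i i' M M' ν ν' N N' q s hN hN' hν hν' hq h1 h2 h3 h4
end

section
/- Let n ≥ 2, positive pairwise coprime integers d_1,...,d_n with product D, and integers i_1,...,i_n with the property that whenever d_ℓ divides i_ℓ for at least n−1 indices ℓ, then i_ℓ = d_ℓ for at least n−1 indices (allowedness for r=1), and all i_ℓ ≠ 0. Then i' := (1−n)·D + ∑_{ℓ=1}^n (D/d_ℓ)·i_ℓ is nonzero. -/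
/-! If `i' = 0`, then reducing `i'` modulo `d_ℓ` kills every term except `(D/d_ℓ)·i_ℓ`, and
`D/d_ℓ` is a unit modulo `d_ℓ` by coprimality; hence `d_ℓ ∣ i_ℓ` for every `ℓ`. Allowedness then
gives `i_ℓ = d_ℓ` on a set `T` of at least `n - 1` indices, each contributing `D` to the sum.
If `T` is everything, `i' = D`; otherwise `T` misses a single index `ℓ₀` and `i' = (D/d_ℓ₀)·i_ℓ₀`.
Neither vanishes. -/

open Finset Function

section StarDiagram

variable {ι R : Type*} [Fintype ι] [DecidableEq ι]

theorem Nat.prod_div_eq_prod_erase_s5 (d : ι → ℕ) {ℓ : ι} (hℓ : 0 < d ℓ) :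
    (∏ m, d m) / d ℓ = ∏ m ∈ univ.erase ℓ, d m := by
  rw [← prod_erase_mul _ _ (mem_univ ℓ)]
  exact Nat.mul_div_cancel _ hℓ

theorem dvd_of_dvd_sum_prod_erase_mul [CommRing R] {d i : ι → R}
    (hcop : Pairwise (IsCoprime on d)) {ℓ : ι}
    (h : d ℓ ∣ ∑ k, (∏ m ∈ univ.erase k, d m) * i k) : d ℓ ∣ i ℓ := by
  have hothers : d ℓ ∣ ∑ k ∈ univ.erase ℓ, (∏ m ∈ univ.erase k, d m) * i k :=
    dvd_sum fun k hk =>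
      (dvd_prod_of_mem d (mem_erase.2 ⟨fun e => (ne_of_mem_erase hk) e.symm, mem_univ ℓ⟩)).mul_right _
  rw [← sum_erase_add _ _ (mem_univ ℓ)] at h
  have hcofactor : IsCoprime (d ℓ) (∏ m ∈ univ.erase ℓ, d m) :=
    IsCoprime.prod_right fun m hm => hcop (ne_of_mem_erase hm).symm
  exact hcofactor.dvd_of_dvd_mul_left ((dvd_add_right hothers).1 h)

theorem sum_prod_erase_mul_eq_card_mul_prod [CommRing R] {d i : ι → R} {T : Finset ι}
    (hT : ∀ k ∈ T, i k = d k) :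
    ∑ k ∈ T, (∏ m ∈ univ.erase k, d m) * i k = T.card * ∏ m, d m := by
  rw [sum_congr rfl fun k hk => by rw [hT k hk, prod_erase_mul _ _ (mem_univ k)],
    sum_const, nsmul_eq_mul]

theorem one_sub_card_mul_prod_add_sum_ne_zero [CommRing R] [IsDomain R] {d i : ι → R}
    (hd : ∀ ℓ, d ℓ ≠ 0) (hcop : Pairwise (IsCoprime on d)) (hi : ∀ ℓ, i ℓ ≠ 0)
    (hallow : (∀ ℓ, d ℓ ∣ i ℓ) →
      ∃ T : Finset ι, Fintype.card ι - 1 ≤ T.card ∧ ∀ ℓ ∈ T, i ℓ = d ℓ) :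
    (1 - (Fintype.card ι : R)) * ∏ m, d m + ∑ k, (∏ m ∈ univ.erase k, d m) * i k ≠ 0 := by
  intro h
  have hdvd : ∀ ℓ, d ℓ ∣ i ℓ := fun ℓ => dvd_of_dvd_sum_prod_erase_mul hcop <| by
    rw [eq_neg_of_add_eq_zero_right h]
    exact ((dvd_prod_of_mem d (mem_univ ℓ)).mul_left _).neg_right
  obtain ⟨T, hTcard, hT⟩ := hallow hdvd
  rw [← sum_add_sum_compl T, sum_prod_erase_mul_eq_card_mul_prod hT] at h
  have hcompl : Tᶜ.card = Fintype.card ι - T.card := card_compl T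
  have hTle : T.card ≤ Fintype.card ι := card_le_univ T
  rcases Nat.le_one_iff_eq_zero_or_eq_one.1 (by omega : Tᶜ.card ≤ 1) with h0 | h1
  · rw [card_eq_zero.1 h0, sum_empty, (compl_eq_empty_iff T).1 (card_eq_zero.1 h0), card_univ] at h
    exact prod_ne_zero_iff.2 (fun ℓ _ => hd ℓ) (by linear_combination h)
  · obtain ⟨ℓ₀, hℓ₀⟩ := card_eq_one.1 h1
    have hcard : (T.card : R) = Fintype.card ι - 1 := by
      rw [eq_sub_iff_add_eq, ← Nat.cast_one, ← Nat.cast_add]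
      congr 1
      omega
    rw [hℓ₀, sum_singleton, hcard] at h
    exact mul_ne_zero (prod_ne_zero_iff.2 fun ℓ _ => hd ℓ : ∏ m ∈ univ.erase ℓ₀, d m ≠ 0) (hi ℓ₀)
      (by linear_combination h)

end StarDiagram

theorem stmt5_general (n : ℕ) (d : Fin n → ℕ)
    (hpos : ∀ ℓ, 0 < d ℓ)
    (hcop : ∀ a b : Fin n, a ≠ b → Nat.Coprime (d a) (d b))
    (D : ℕ) (hD : D = ∏ ℓ, d ℓ)
    (i : Fin n → ℤ) (hi : ∀ ℓ, i ℓ ≠ 0)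
    (hallow : (∃ S : Finset (Fin n), n - 1 ≤ S.card ∧ ∀ ℓ ∈ S, (d ℓ : ℤ) ∣ i ℓ) →
      ∃ T : Finset (Fin n), n - 1 ≤ T.card ∧ ∀ ℓ ∈ T, i ℓ = (d ℓ : ℤ)) :
    (1 - (n : ℤ)) * D + ∑ ℓ, ((D / d ℓ : ℕ) : ℤ) * i ℓ ≠ 0 := by
  subst hD
  have hcofactor : ∀ ℓ, (((∏ m, d m) / d ℓ : ℕ) : ℤ) = ∏ m ∈ univ.erase ℓ, (d m : ℤ) := fun ℓ => by
    rw [Nat.prod_div_eq_prod_erase_s5 d (hpos ℓ), Nat.cast_prod]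
  simp only [hcofactor, Nat.cast_prod]
  have key := one_sub_card_mul_prod_add_sum_ne_zero (d := fun ℓ => (d ℓ : ℤ))
    (fun ℓ => by exact_mod_cast (hpos ℓ).ne')
    (fun a b hab => Nat.isCoprime_iff_coprime.2 (hcop a b hab)) hi
    (fun hdvd => by simpa using hallow ⟨univ, by simp, fun ℓ _ => hdvd ℓ⟩)
  simpa using key

/-- For an allowed divisor on a star-shaped diagram with one arrowhead, the
induced multiplicity `i' = (1-n)D + ∑ (D/dℓ)·iℓ` is nonzero. -/
theorem stmt5 (n : ℕ) (hn : 2 ≤ n) (d : Fin n → ℕ)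
    (hpos : ∀ ℓ, 0 < d ℓ)
    (hcop : ∀ a b : Fin n, a ≠ b → Nat.Coprime (d a) (d b))
    (D : ℕ) (hD : D = ∏ ℓ, d ℓ)
    (i : Fin n → ℤ) (hi : ∀ ℓ, i ℓ ≠ 0)
    (hallow : (∃ S : Finset (Fin n), n - 1 ≤ S.card ∧ ∀ ℓ ∈ S, (d ℓ : ℤ) ∣ i ℓ) →
      ∃ T : Finset (Fin n), n - 1 ≤ T.card ∧ ∀ ℓ ∈ T, i ℓ = (d ℓ : ℤ)) :
    (1 - (n : ℤ)) * D + ∑ ℓ, ((D / d ℓ : ℕ) : ℤ) * i ℓ ≠ 0 :=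
  stmt5_general n d hpos hcop D hD i hi hallow
end

section
/- Let A(i+sM) + d(i'+sM') = ν + sN and B(i'+sM') + d'(i+sM) = ν' + sN' as polynomial identities in s, with A, B, d, d' positive integers and q = dd' − AB > 0. If −ν/N is not a pole of order 2 (i.e., (ν,N) and (i,M) are linearly independent, with N, M such that denominators are nonzero at s = −ν/N), then (1/N)·( q/(ν' + sN') − d/(i + sM) ) evaluated at s = −ν/N equals zero. -/
/-!
At `s = -ν/N` the relation `A(i+sM) + d(i'+sM') = ν + sN` says `A x + d y = 0`, where
`x = i+sM`, `y = i'+sM'`. Then `q x - d(ν'+sN') = (dd' - AB) x - d(B y + d' x) = -B(A x + d y) = 0`,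
so `q/(ν'+sN') = d/(i+sM)` as soon as both denominators are nonzero.
-/

theorem add_neg_div_mul_eq_zero_iff {K : Type*} [Field K] {a b ν N : K} (hN : N ≠ 0) :
    a + (-ν / N) * b = 0 ↔ a * N = ν * b := by
  rw [neg_div, neg_mul, ← sub_eq_add_neg, sub_eq_zero, div_mul_eq_mul_div, eq_div_iff hN]

theorem splice_mul_eq_of_add_eq_zero {R : Type*} [CommRing R] {A B d d' x y : R}
    (h : A * x + d * y = 0) : (d * d' - A * B) * x = d * (B * y + d' * x) := by
  linear_combination (-B) * h

theorem stmt19_general (A B d d' i i' M M' ν ν' N N' q : ℚ)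
    (hν : ν = A * i + d * i') (hN : N = A * M + d * M')
    (hν' : ν' = B * i' + d' * i) (hN' : N' = B * M' + d' * M)
    (hq : q = d * d' - A * B)
    (hN0 : N ≠ 0)
    (hindep : ν * M - N * i ≠ 0)
    (hindep2 : ν' * N - ν * N' ≠ 0) :
    (1 / N) * (q / (ν' + (-ν / N) * N') - d / (i + (-ν / N) * M)) = 0 := by
  set s := -ν / N
  have hpole : ν + s * N = 0 := (add_neg_div_mul_eq_zero_iff hN0).2 rfl
  have hx : i + s * M ≠ 0 := fun h ↦
    hindep (by linear_combination -(add_neg_div_mul_eq_zero_iff hN0).1 h)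
  have hD : ν' + s * N' ≠ 0 := fun h ↦
    hindep2 (sub_eq_zero.2 ((add_neg_div_mul_eq_zero_iff hN0).1 h))
  have key := splice_mul_eq_of_add_eq_zero (d' := d') (B := B)
    (show A * (i + s * M) + d * (i' + s * M') = 0 by rw [← hpole, hν, hN]; ring)
  rw [sub_eq_zero.2 ((div_eq_div_iff hD hx).2 _), mul_zero]
  calc q * (i + s * M) = d * (B * (i' + s * M') + d' * (i + s * M)) := by rw [hq, key]
    _ = d * (ν' + s * N') := by rw [hν', hN']; ring

/-- Part (3) of the splice decomposition theorem: the difference of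
residue contributions vanishes at `s = −ν/N`. -/
theorem stmt19 (A B d d' i i' M M' ν ν' N N' q : ℚ)
    (hA : 0 < A) (hB : 0 < B) (hd : 0 < d) (hd' : 0 < d')
    (hν : ν = A * i + d * i') (hN : N = A * M + d * M')
    (hν' : ν' = B * i' + d' * i) (hN' : N' = B * M' + d' * M)
    (hq : q = d * d' - A * B) (hqpos : 0 < q)
    (hN0 : N ≠ 0)
    (hindep : ν * M - N * i ≠ 0)
    (hindep2 : ν' * N - ν * N' ≠ 0) :
    (1 / N) * (q / (ν' + (-ν / N) * N') - d / (i + (-ν / N) * M)) = 0 :=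
  stmt19_general A B d d' i i' M M' ν ν' N N' q hν hN hν' hN' hq hN0 hindep hindep2
end
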